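/- arXiv:math/0302282 — 5 statements merged into one kernel-verified Lean document; each statement's English description precedes it below -/
import Mathlib

section
/- If a discrete dynamical system (X,T) with X a metric space and T : X → X continuous is sensitive to initial conditions with sensitivity constant δ > 0, and the set of periodic points of T is dense in X, then (X,T) is asymptotically sensitive: there exists δ' > 0 such that every open ball B_ε(x) contains points y, z with d(Tⁿ(y), Tⁿ(z)) > δ' for infinitely many natural numbers n. -/
/-- sensitivity + dense periodic points implies asymptotic sensitivity. -/
theorem sensitive_densePeriodic_asymptoticSensitive
    {X : Type*} [MetricSpace X] (T : X → X) (hT : Continuous T)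
    (δ : ℝ) (hδ : 0 < δ)
    (hsens : ∀ x : X, ∀ ε > 0, ∃ y z : X, dist y x < ε ∧ dist z x < ε ∧
      ∃ n ≥ 1, dist (T^[n] y) (T^[n] z) > δ)
    (hper : Dense {p : X | ∃ k ≥ 1, T^[k] p = p}) :
    ∃ δ' > 0, ∀ x : X, ∀ ε > 0, ∃ y z : X, dist y x < ε ∧ dist z x < ε ∧
      {n : ℕ | dist (T^[n] y) (T^[n] z) > δ'}.Infinite := by
  refine ⟨δ/2, by linarith, fun x ε hε => ?_⟩
  obtain ⟨y, z, hy, hz, n, hn1, hsep⟩ := hsens x (ε/2) (by linarith)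
  -- continuity of T^[n] at y and z
  have hcont : Continuous (T^[n]) := hT.iterate n
  obtain ⟨ηy, hηy, hηy'⟩ := Metric.continuousAt_iff.mp (hcont.continuousAt (x := y)) (δ/4) (by linarith)
  obtain ⟨ηz, hηz, hηz'⟩ := Metric.continuousAt_iff.mp (hcont.continuousAt (x := z)) (δ/4) (by linarith)
  -- pick periodic points p near y, q near z
  obtain ⟨p, hpmem, hpd⟩ := Metric.dense_iff.mp hper y (min ηy (ε/2)) (lt_min hηy (by linarith))
  obtain ⟨q, hqmem, hqd⟩ := Metric.dense_iff.mp hper z (min ηz (ε/2)) (lt_min hηz (by linarith))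
  obtain ⟨k, hk1, hkp⟩ := hpd
  obtain ⟨l, hl1, hlq⟩ := hqd
  rw [Metric.mem_ball] at hpmem hqmem
  have hpy : dist p y < ηy := lt_of_lt_of_le hpmem (min_le_left _ _)
  have hpy2 : dist p y < ε/2 := lt_of_lt_of_le hpmem (min_le_right _ _)
  have hqz : dist q z < ηz := lt_of_lt_of_le hqmem (min_le_left _ _)
  have hqz2 : dist q z < ε/2 := lt_of_lt_of_le hqmem (min_le_right _ _)
  have hTpy : dist (T^[n] p) (T^[n] y) < δ/4 := hηy' hpy
  have hTqz : dist (T^[n] q) (T^[n] z) < δ/4 := hηz' hqz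
  -- separation at time n for p, q
  have hsep' : dist (T^[n] p) (T^[n] q) > δ/2 := by
    have h1 := dist_triangle (T^[n] y) (T^[n] p) (T^[n] q)
    have h2 := dist_triangle (T^[n] p) (T^[n] q) (T^[n] z)
    have h3 : dist (T^[n] y) (T^[n] z) ≤
        dist (T^[n] y) (T^[n] p) + dist (T^[n] p) (T^[n] q) + dist (T^[n] q) (T^[n] z) :=
      dist_triangle4 _ _ _ _
    linarith [dist_comm (T^[n] p) (T^[n] y), dist_comm (T^[n] z) (T^[n] q),
      dist_comm (T^[n] q) (T^[n] z)]
  -- periodicity of both points with common period K = k*l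
  have hK1 : 1 ≤ k * l := Nat.one_le_iff_ne_zero.mpr (Nat.mul_ne_zero (by omega) (by omega))
  have hpK : ∀ m : ℕ, T^[m * (k * l)] p = p := by
    intro m
    have : T^[m * (k * l)] p = (T^[k])^[m * l] p := by
      rw [← Function.iterate_mul]; ring_nf
    rw [this, Function.iterate_fixed hkp]
  have hqK : ∀ m : ℕ, T^[m * (k * l)] q = q := by
    intro m
    have : T^[m * (k * l)] q = (T^[l])^[m * k] q := by
      rw [← Function.iterate_mul]; ring_nf
    rw [this, Function.iterate_fixed hlq]
  refine ⟨p, q, ?_, ?_, ?_⟩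
  · calc dist p x ≤ dist p y + dist y x := dist_triangle _ _ _
      _ < ε := by linarith
  · calc dist q x ≤ dist q z + dist z x := dist_triangle _ _ _
      _ < ε := by linarith
  · apply Set.infinite_of_injective_forall_mem
      (f := fun m : ℕ => n + m * (k * l))
    · intro a b hab
      simp only at hab
      have : a * (k * l) = b * (k * l) := by omega
      exact Nat.eq_of_mul_eq_mul_right (by omega) this
    · intro m
      simp only [Set.mem_setOf_eq]
      have hp' : T^[n + m * (k * l)] p = T^[n] p := by
        rw [Function.iterate_add_apply, hpK]
      have hq' : T^[n + m * (k * l)] q = T^[n] q := by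
        rw [Function.iterate_add_apply, hqK]
      rw [hp', hq']; exact hsep'
end

section
/- Every Devaney chaotic system (topologically transitive, dense periodic points, sensitive) on a metric space is asymptotically sensitive. -/
/-- Devaney chaotic systems are asymptotically sensitive. -/
theorem devaney_imp_asymptoticSensitive
    {X : Type*} [MetricSpace X] (T : X → X) (hT : Continuous T)
    (htrans : ∀ U V : Set X, IsOpen U → IsOpen V → U.Nonempty → V.Nonempty →
      ∃ n : ℕ, (T^[n] '' U ∩ V).Nonempty)
    (hper : Dense {p : X | ∃ k ≥ 1, T^[k] p = p})
    (hsens : ∃ δ > 0, ∀ x : X, ∀ ε > 0, ∃ y z : X, dist y x < ε ∧ dist z x < ε ∧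
      ∃ n ≥ 1, dist (T^[n] y) (T^[n] z) > δ) :
    ∃ δ' > 0, ∀ x : X, ∀ ε > 0, ∃ y z : X, dist y x < ε ∧ dist z x < ε ∧
      {n : ℕ | dist (T^[n] y) (T^[n] z) > δ'}.Infinite := by
  obtain ⟨δ, hδ, hs⟩ := hsens
  refine ⟨δ / 4, by positivity, fun x ε hε => ?_⟩
  -- a periodic point p near x
  obtain ⟨p, ⟨k, hk1, hpk⟩, hpball⟩ :=
    hper.exists_mem_open (Metric.isOpen_ball (x := x) (ε := ε / 2))
      ⟨x, Metric.mem_ball_self (by positivity)⟩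
  rw [Metric.mem_ball] at hpball
  -- sensitivity at p
  obtain ⟨y, z, hy, hz, n, hn1, hsep⟩ := hs p (ε / 2) (by positivity)
  -- one of y, z separates from p at time n
  have hone : ∃ w, dist w p < ε / 2 ∧ dist (T^[n] w) (T^[n] p) > δ / 2 := by
    by_contra h
    push_neg at h
    have h1 := h y hy
    have h2 := h z hz
    have h3 := dist_triangle (T^[n] y) (T^[n] p) (T^[n] z)
    have h4 : dist (T^[n] p) (T^[n] z) = dist (T^[n] z) (T^[n] p) := dist_comm _ _
    linarith
  obtain ⟨w, hw, hwsep⟩ := hone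
  -- continuity of T^[n] at w
  obtain ⟨r, hr, hcont⟩ := Metric.continuous_iff.mp (hT.iterate n) w (δ / 4) (by positivity)
  have hwx : dist w x < ε := by
    have := dist_triangle w p x
    linarith
  -- a periodic point q near w (and inside the ε-ball around x)
  have hopen : IsOpen (Metric.ball w r ∩ Metric.ball x ε) :=
    Metric.isOpen_ball.inter Metric.isOpen_ball
  obtain ⟨q, ⟨m, hm1, hqm⟩, hq1, hq2⟩ :=
    hper.exists_mem_open hopen
      ⟨w, Metric.mem_ball_self hr, Metric.mem_ball.mpr hwx⟩
  rw [Metric.mem_ball] at hq1 hq2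
  refine ⟨q, p, hq2, by linarith, ?_⟩
  have hqsep : dist (T^[n] q) (T^[n] p) > δ / 4 := by
    have h5 := hcont q hq1
    have h6 := dist_triangle (T^[n] w) (T^[n] q) (T^[n] p)
    have h7 : dist (T^[n] w) (T^[n] q) = dist (T^[n] q) (T^[n] w) := dist_comm _ _
    linarith
  have hfixq : ∀ l : ℕ, T^[l * (k * m)] q = q := by
    intro l
    have hrw : l * (k * m) = m * (l * k) := by ring
    rw [hrw, Function.iterate_mul]
    exact Function.iterate_fixed hqm _
  have hfixp : ∀ l : ℕ, T^[l * (k * m)] p = p := by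
    intro l
    have hrw : l * (k * m) = k * (l * m) := by ring
    rw [hrw, Function.iterate_mul]
    exact Function.iterate_fixed hpk _
  have hkm : 0 < k * m := Nat.mul_pos hk1 hm1
  refine Set.infinite_of_injective_forall_mem (f := fun l : ℕ => n + l * (k * m)) ?_ ?_
  · intro a b hab
    exact Nat.eq_of_mul_eq_mul_right hkm (Nat.add_left_cancel hab)
  · intro l
    simp only [Set.mem_setOf_eq, Function.iterate_add_apply]
    rw [hfixq l, hfixp l]
    exact hqsep
end

section
/- The logistic map L(x) = 4x(1−x) on [0,1] has a dense set of periodic points. -/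
/-!
The map `θ ↦ sin² θ` semiconjugates the doubling map to `L`, so `L^[k] (sin² θ) = sin² (2^k θ)`.
If `(2^k - 1) θ ∈ πℤ` then `2^k θ ≡ θ (mod π)` and `sin² θ` is `k`-periodic. The angles `jπ/(2^k - 1)`
form a `π/(2^k - 1)`-net of `ℝ`, and `sin²` is `1`-Lipschitz and maps `ℝ` onto `[0, 1]`.
-/

open Real Function Filter

def logistic (t : ℝ) : ℝ := 4 * t * (1 - t)

theorem semiconj_sin_sq_logistic : Semiconj (fun θ => sin θ ^ 2) (2 * ·) logistic := fun θ => by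
  simp only [logistic, sin_two_mul, ← cos_sq']
  ring

theorem logistic_iterate_sin_sq (k : ℕ) (θ : ℝ) :
    logistic^[k] (sin θ ^ 2) = sin (2 ^ k * θ) ^ 2 := by
  rw [← (semiconj_sin_sq_logistic.iterate_right k) θ, mul_left_iterate_apply]

theorem sin_sq_periodic : Periodic (fun θ => sin θ ^ 2) π := by
  intro θ
  simp only [sin_antiperiodic θ, neg_sq]

theorem isPeriodicPt_logistic_sin_sq {k : ℕ} {θ : ℝ} {j : ℤ} (h : ((2 : ℝ) ^ k - 1) * θ = j * π) :
    IsPeriodicPt logistic k (sin θ ^ 2) := by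
  have hθ : 2 ^ k * θ = θ + j * π := by linear_combination h
  rw [IsPeriodicPt, IsFixedPt, logistic_iterate_sin_sq, hθ]
  exact sin_sq_periodic.int_mul j θ

theorem abs_sin_sq_sub_sin_sq_le (a b : ℝ) : |sin a ^ 2 - sin b ^ 2| ≤ |a - b| := by
  have h := abs_cos_sub_cos_le (2 * b) (2 * a)
  rw [← mul_sub, abs_mul, abs_two, abs_sub_comm b a] at h
  rw [sin_sq_eq_half_sub, sin_sq_eq_half_sub,
    show 1 / 2 - cos (2 * a) / 2 - (1 / 2 - cos (2 * b) / 2) = (cos (2 * b) - cos (2 * a)) / 2 by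
      ring, abs_div, abs_two]
  linarith

theorem exists_sin_sq_eq {x : ℝ} (hx : x ∈ Set.Icc (0 : ℝ) 1) : ∃ θ, sin θ ^ 2 = x :=
  ⟨arcsin (√x), by
    rw [sin_arcsin (by linarith [sqrt_nonneg x]) (sqrt_le_one.mpr hx.2), sq_sqrt hx.1]⟩

theorem exists_int_abs_mul_sub_le {c : ℝ} (hc : 0 < c) (x : ℝ) : ∃ j : ℤ, |j * c - x| ≤ c / 2 := by
  refine ⟨round (x / c), ?_⟩
  have h := abs_sub_round (x / c)
  rw [abs_sub_comm] at h
  calc |round (x / c) * c - x| = |(round (x / c) - x / c) * c| := by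
        rw [sub_mul, div_mul_cancel₀ _ hc.ne']
    _ = |round (x / c) - x / c| * c := by rw [abs_mul, abs_of_pos hc]
    _ ≤ 1 / 2 * c := by gcongr
    _ = c / 2 := by ring

theorem eventually_pi_div_pow_two_sub_one_lt {ε : ℝ} (hε : 0 < ε) :
    ∀ᶠ k : ℕ in atTop, π / (2 ^ k - 1) < ε := by
  have h : Tendsto (fun k : ℕ => (2 : ℝ) ^ k - 1) atTop atTop :=
    tendsto_atTop_add_const_right _ _ (tendsto_pow_atTop_atTop_of_one_lt one_lt_two)
  exact (tendsto_const_nhds.div_atTop h).eventually (gt_mem_nhds hε)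

/-- the logistic map has dense periodic points in [0,1]. -/
theorem logistic_dense_periodic :
    ∀ x ∈ Set.Icc (0:ℝ) 1, ∀ ε > 0, ∃ p ∈ Set.Icc (0:ℝ) 1,
      |p - x| < ε ∧ ∃ k ≥ 1, (fun t : ℝ => 4 * t * (1 - t))^[k] p = p := by
  intro x hx ε hε
  obtain ⟨θ₀, rfl⟩ := exists_sin_sq_eq hx
  obtain ⟨k, hk, hkε⟩ :=
    ((eventually_ge_atTop 1).and (eventually_pi_div_pow_two_sub_one_lt hε)).exists
  have hN : (0 : ℝ) < 2 ^ k - 1 := sub_pos.2 (one_lt_pow₀ one_lt_two (by omega))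
  obtain ⟨j, hj⟩ := exists_int_abs_mul_sub_le (div_pos pi_pos hN) θ₀
  set θ := j * (π / (2 ^ k - 1))
  refine ⟨sin θ ^ 2, ⟨sq_nonneg _, sin_sq_le_one θ⟩, ?_, k, hk, ?_⟩
  · calc |sin θ ^ 2 - sin θ₀ ^ 2| ≤ |θ - θ₀| := abs_sin_sq_sub_sin_sq_le θ θ₀
      _ < ε := by linarith [div_pos pi_pos hN]
  · exact isPeriodicPt_logistic_sin_sq (j := j) (by simp only [θ]; field_simp)
end

section
/- The logistic map L(x) = 4x(1−x) on [0,1] is asymptotically sensitive. -/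
open Real

private lemma logistic_sin_sq (a : ℝ) :
    (fun t : ℝ => 4 * t * (1 - t)) (Real.sin a ^ 2) = Real.sin (2 * a) ^ 2 := by
  simp only [Real.sin_two_mul]
  have h := Real.sin_sq_add_cos_sq a
  nlinarith [h]

private lemma logistic_iter_sin_sq (n : ℕ) (a : ℝ) :
    (fun t : ℝ => 4 * t * (1 - t))^[n] (Real.sin a ^ 2) = Real.sin (2 ^ n * a) ^ 2 := by
  induction n generalizing a with
  | zero => simp
  | succ n ih =>
    rw [Function.iterate_succ_apply]
    have h : 4 * Real.sin a ^ 2 * (1 - Real.sin a ^ 2) = Real.sin (2 * a) ^ 2 :=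
      logistic_sin_sq a
    show (fun t : ℝ => 4 * t * (1 - t))^[n] (4 * Real.sin a ^ 2 * (1 - Real.sin a ^ 2)) = _
    rw [h, ih (2 * a)]
    ring_nf

private lemma sin_sq_two_pow_pi_div_three (j : ℕ) :
    Real.sin (2 ^ j * (π / 3)) ^ 2 = 3 / 4 := by
  induction j with
  | zero =>
    simp [Real.sin_pi_div_three]
    rw [div_pow, Real.sq_sqrt (by norm_num : (3:ℝ) ≥ 0)]
    norm_num
  | succ j ih =>
    have : (2:ℝ) ^ (j+1) * (π/3) = 2 * (2 ^ j * (π/3)) := by ring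
    rw [this, Real.sin_two_mul]
    have h := Real.sin_sq_add_cos_sq ((2:ℝ) ^ j * (π/3))
    nlinarith [ih, h]

private lemma abs_sin_sub_sin (a b : ℝ) : |Real.sin a - Real.sin b| ≤ |a - b| := by
  rw [Real.sin_sub_sin, abs_mul, abs_mul]
  have h1 : |Real.sin ((a-b)/2)| ≤ |(a-b)/2| := Real.abs_sin_le_abs
  have h2 : |Real.cos ((a+b)/2)| ≤ 1 := Real.abs_cos_le_one _
  have h3 : |(a-b)/2| = |a-b|/2 := by rw [abs_div]; norm_num
  have h4 : |(2:ℝ)| = 2 := by norm_num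
  rw [h4]
  nlinarith [abs_nonneg (Real.sin ((a-b)/2)), abs_nonneg (a-b)]

private lemma abs_sin_sq_sub (a b : ℝ) :
    |Real.sin a ^ 2 - Real.sin b ^ 2| ≤ 2 * |a - b| := by
  have h1 := abs_sin_sub_sin a b
  have h2 : |Real.sin a + Real.sin b| ≤ 2 := by
    calc |Real.sin a + Real.sin b| ≤ |Real.sin a| + |Real.sin b| := abs_add_le _ _
      _ ≤ 1 + 1 := add_le_add (Real.abs_sin_le_one a) (Real.abs_sin_le_one b)
      _ = 2 := by norm_num
  calc |Real.sin a ^ 2 - Real.sin b ^ 2|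
      = |Real.sin a - Real.sin b| * |Real.sin a + Real.sin b| := by
        rw [← abs_mul]; ring_nf
    _ ≤ |a - b| * 2 := mul_le_mul h1 h2 (abs_nonneg _) (abs_nonneg _)
    _ = 2 * |a - b| := by ring

private lemma sin_sq_mem_Icc (a : ℝ) : Real.sin a ^ 2 ∈ Set.Icc (0:ℝ) 1 :=
  ⟨sq_nonneg _, Real.sin_sq_le_one a⟩

/-- the logistic map is asymptotically sensitive on [0,1]. -/
theorem logistic_asymptoticSensitive :
    ∃ δ > 0, ∀ x ∈ Set.Icc (0:ℝ) 1, ∀ ε > 0,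
      ∃ y ∈ Set.Icc (0:ℝ) 1, ∃ z ∈ Set.Icc (0:ℝ) 1,
        |y - x| < ε ∧ |z - x| < ε ∧
        {n : ℕ | |(fun t : ℝ => 4 * t * (1 - t))^[n] y -
          (fun t : ℝ => 4 * t * (1 - t))^[n] z| > δ}.Infinite := by
  refine ⟨1/2, by norm_num, ?_⟩
  rintro x ⟨hx0, hx1⟩ ε hε
  -- parameterize x = sin(π s)^2
  set s : ℝ := Real.arcsin (Real.sqrt x) / π with hs
  have hπ : (0:ℝ) < π := Real.pi_pos
  have hxs : Real.sin (π * s) ^ 2 = x := by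
    have : π * s = Real.arcsin (Real.sqrt x) := by
      rw [hs]; field_simp
    rw [this, Real.sin_arcsin (le_trans (by norm_num) (Real.sqrt_nonneg x))
      (by rw [show (1:ℝ) = Real.sqrt 1 by simp]; exact Real.sqrt_le_sqrt hx1),
      Real.sq_sqrt hx0]
  -- choose dyadic scale
  obtain ⟨m, hm⟩ : ∃ m : ℕ, 16 / ε < 2 ^ m := pow_unbounded_of_one_lt _ (by norm_num)
  have h2m : (0:ℝ) < 2 ^ m := by positivity
  have hsmall : (2:ℝ) / 2 ^ m < ε / 8 := by
    rw [div_lt_div_iff₀ h2m (by norm_num)]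
    rw [div_lt_iff₀ hε] at hm
    nlinarith
  set k : ℤ := ⌊s * 2 ^ m⌋ with hk
  set θ₁ : ℝ := (k : ℝ) / 2 ^ m with hθ₁
  set θ₂ : ℝ := ((k : ℝ) + 1/3) / 2 ^ m with hθ₂
  have h1 := Int.floor_le (s * 2 ^ m)
  have h2 := Int.lt_floor_add_one (s * 2 ^ m)
  have hd1 : |θ₁ - s| ≤ 2 / 2 ^ m := by
    have e : θ₁ - s = ((k:ℝ) - s * 2 ^ m) / 2 ^ m := by rw [hθ₁]; field_simp
    rw [e, abs_div, abs_of_pos h2m]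
    gcongr
    rw [abs_le]
    constructor <;> · rw [hk]; push_cast; nlinarith [h1, h2]
  have hd2 : |θ₂ - s| ≤ 2 / 2 ^ m := by
    have e : θ₂ - s = ((k:ℝ) + 1/3 - s * 2 ^ m) / 2 ^ m := by rw [hθ₂]; field_simp
    rw [e, abs_div, abs_of_pos h2m]
    gcongr
    rw [abs_le]
    constructor <;> · rw [hk]; push_cast; nlinarith [h1, h2]
  set y : ℝ := Real.sin (π * θ₁) ^ 2 with hy
  set z : ℝ := Real.sin (π * θ₂) ^ 2 with hz
  have hπ4 : π < 4 := by nlinarith [Real.pi_lt_d2]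
  have hclose : ∀ θ : ℝ, |θ - s| ≤ 2 / 2 ^ m → |Real.sin (π * θ) ^ 2 - x| < ε := by
    intro θ hθ
    have h1 : |Real.sin (π * θ) ^ 2 - x| ≤ 2 * |π * θ - π * s| := by
      rw [← hxs]; exact abs_sin_sq_sub _ _
    have h2 : |π * θ - π * s| = π * |θ - s| := by
      rw [← mul_sub, abs_mul, abs_of_pos hπ]
    calc |Real.sin (π * θ) ^ 2 - x| ≤ 2 * (π * |θ - s|) := by rw [← h2]; exact h1
      _ ≤ 2 * (π * (2 / 2 ^ m)) := by
          gcongr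
      _ < 2 * (4 * (ε / 8)) := by
          have : (0:ℝ) < 2 / 2 ^ m := by positivity
          gcongr 2 * ?_
          calc π * (2 / 2 ^ m) < 4 * (2 / 2 ^ m) := by gcongr
            _ < 4 * (ε / 8) := by gcongr
      _ = ε := by ring
  refine ⟨y, sin_sq_mem_Icc _, z, sin_sq_mem_Icc _, hclose θ₁ hd1, hclose θ₂ hd2, ?_⟩
  -- the set contains all n ≥ m
  apply (Set.Ici_infinite m).mono
  intro n hn
  obtain ⟨j, rfl⟩ := Nat.exists_eq_add_of_le (Set.mem_Ici.mp hn)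
  have h2mne : (2:ℝ) ^ m ≠ 0 := ne_of_gt h2m
  have hYn : (fun t : ℝ => 4 * t * (1 - t))^[m + j] y = 0 := by
    rw [hy, logistic_iter_sin_sq]
    have : (2:ℝ) ^ (m + j) * (π * θ₁) = ((k * 2 ^ j : ℤ) : ℝ) * π := by
      rw [hθ₁]; push_cast; field_simp; ring
    rw [this, Real.sin_int_mul_pi]
    norm_num
  have hZn : (fun t : ℝ => 4 * t * (1 - t))^[m + j] z = 3 / 4 := by
    rw [hz, logistic_iter_sin_sq]
    have harg : (2:ℝ) ^ (m + j) * (π * θ₂) = 2 ^ j * (π / 3) + ((k * 2 ^ j : ℤ) : ℝ) * π := by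
      rw [hθ₂]; push_cast; field_simp; ring
    rw [harg, Real.sin_add_int_mul_pi, mul_pow]
    have hsign : ((-1:ℝ) ^ (k * 2 ^ j : ℤ)) ^ 2 = 1 := by
      rcases Int.even_or_odd (k * 2 ^ j) with h | h
      · rw [h.neg_one_zpow]; norm_num
      · rw [Odd.neg_one_zpow h]; norm_num
    rw [hsign, one_mul, sin_sq_two_pow_pi_div_three]
  simp only [Set.mem_setOf_eq, hYn, hZn]
  rw [abs_of_nonpos (by norm_num)]
  norm_num
end

section
/- There exists a dynamical system that is sensitive to initial conditions but not asymptotically sensitive (namely the shift restricted to eventually-zero binary sequences). -/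
/-!
Let `X` be the space of binary sequences that are eventually `0`, with the metric
`d(x, y) = 2 ^ (-n)`, `n` the first index where `x` and `y` differ, and let `T` be the shift.
Changing the `n`-th term of `x` gives a point within `2 ^ (-n)` of `x` whose orbit is at distance
`1` from that of `x` at time `n`, so `T` is sensitive. But any two points of `X` are eventually
mapped to the zero sequence, so no pair of orbits stays apart infinitely often.
-/

open Filter Function Set PiNat

section Sensitivity

variable {X : Type*} [PseudoMetricSpace X]

def Sensitive (T : X → X) (δ : ℝ) : Prop :=
  ∀ x : X, ∀ ε > 0, ∃ y z : X, dist y x < ε ∧ dist z x < ε ∧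
    ∃ n ≥ 1, dist (T^[n] y) (T^[n] z) > δ

def AsymptoticallySensitive (T : X → X) (δ : ℝ) : Prop :=
  ∀ x : X, ∀ ε > 0, ∃ y z : X, dist y x < ε ∧ dist z x < ε ∧
    {n : ℕ | dist (T^[n] y) (T^[n] z) > δ}.Infinite

theorem not_asymptoticallySensitive_of_eventually_iterate_eq [Nonempty X] {T : X → X} {δ : ℝ}
    (hδ : 0 ≤ δ) (h : ∀ y z : X, ∀ᶠ n in atTop, T^[n] y = T^[n] z) :
    ¬ AsymptoticallySensitive T δ := by
  intro hT
  obtain ⟨y, z, -, -, hinf⟩ := hT (Classical.arbitrary X) 1 one_pos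
  have hfin := eventually_cofinite.1 (Nat.cofinite_eq_atTop ▸ h y z)
  refine hinf (hfin.subset fun n (hn : dist _ _ > δ) heq => ?_)
  rw [heq, dist_self] at hn
  exact hn.not_ge hδ

end Sensitivity

def seqShift {α : Type*} (x : ℕ → α) : ℕ → α := fun n => x (n + 1)

section SeqShift

variable {α : Type*}

theorem iterate_seqShift_apply (x : ℕ → α) (k j : ℕ) : seqShift^[k] x j = x (j + k) := by
  induction k generalizing x with
  | zero => rfl
  | succ k ih => rw [iterate_succ_apply, ih]; rfl

theorem continuous_seqShift [TopologicalSpace α] : Continuous (seqShift : (ℕ → α) → ℕ → α) :=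
  continuous_pi fun n => continuous_apply (n + 1)

def eventuallyEqSet (a : α) : Set (ℕ → α) := {x | ∀ᶠ n in atTop, x n = a}

instance (a : α) : Nonempty (eventuallyEqSet a) :=
  ⟨⟨fun _ => a, Eventually.of_forall fun _ => rfl⟩⟩

theorem mapsTo_seqShift_eventuallyEqSet (a : α) :
    MapsTo seqShift (eventuallyEqSet a) (eventuallyEqSet a) :=
  fun _ hx => (tendsto_add_atTop_nat 1).eventually hx

theorem update_mem_eventuallyEqSet {a : α} {x : ℕ → α} (hx : x ∈ eventuallyEqSet a) (n : ℕ)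
    (b : α) : update x n b ∈ eventuallyEqSet a :=
  (hx.and (eventually_gt_atTop n)).mono fun _ ⟨hm, hnm⟩ => by rwa [update_of_ne hnm.ne']

theorem eventually_iterate_seqShift_eq_const {a : α} {x : ℕ → α} (hx : x ∈ eventuallyEqSet a) :
    ∀ᶠ k in atTop, seqShift^[k] x = fun _ => a := by
  obtain ⟨N, hN⟩ := eventually_atTop.1 hx
  exact eventually_atTop.2 ⟨N, fun k hk => funext fun j => by
    rw [iterate_seqShift_apply, hN _ (hk.trans (Nat.le_add_left k j))]⟩

theorem eventually_iterate_restrict_seqShift_eq {a : α} (y z : eventuallyEqSet a) :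
    ∀ᶠ k in atTop, ((mapsTo_seqShift_eventuallyEqSet a).restrict seqShift _ _)^[k] y =
      ((mapsTo_seqShift_eventuallyEqSet a).restrict seqShift _ _)^[k] z := by
  filter_upwards [eventually_iterate_seqShift_eq_const y.2, eventually_iterate_seqShift_eq_const z.2]
    with k hy hz
  exact Subtype.ext (by rw [MapsTo.coe_iterate_restrict, MapsTo.coe_iterate_restrict, hy, hz])

end SeqShift

-- Its topology is definitionally the product topology, so `continuous_seqShift` applies to it.
attribute [local instance] PiNat.metricSpace

section PiNatMetric

variable {α : Type*} [TopologicalSpace α] [DiscreteTopology α]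

theorem PiNat.dist_eq_one_of_apply_zero_ne {x y : ℕ → α} (h : x 0 ≠ y 0) : dist x y = 1 := by
  have hfirst : firstDiff x y = 0 :=
    Nat.eq_zero_of_not_pos fun hpos => h (apply_eq_of_lt_firstDiff hpos)
  rw [dist_eq_of_ne fun hxy => h (congrFun hxy 0), hfirst, pow_zero]

theorem PiNat.dist_update_le (x : ℕ → α) (n : ℕ) (b : α) : dist (update x n b) x ≤ (1 / 2) ^ n :=
  mem_cylinder_iff_dist_le.1 (update_mem_cylinder x n b)

theorem dist_iterate_seqShift_eq_one {x y : ℕ → α} {n : ℕ} (h : x n ≠ y n) :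
    dist (seqShift^[n] x) (seqShift^[n] y) = 1 := by
  apply PiNat.dist_eq_one_of_apply_zero_ne
  rwa [iterate_seqShift_apply, iterate_seqShift_apply, zero_add]

theorem sensitive_restrict_seqShift [Nontrivial α] (a : α) {δ : ℝ} (hδ : δ < 1) :
    Sensitive ((mapsTo_seqShift_eventuallyEqSet a).restrict seqShift _ _) δ := by
  intro x ε hε
  have hsmall : ∀ᶠ n in atTop, (1 / 2 : ℝ) ^ n < ε :=
    (tendsto_pow_atTop_nhds_zero_of_lt_one (by norm_num) (by norm_num)).eventually
      (gt_mem_nhds hε)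
  obtain ⟨n, hn, hnε⟩ := ((eventually_ge_atTop 1).and hsmall).exists
  obtain ⟨b, hb⟩ := exists_ne (x.1 n)
  refine ⟨x, ⟨update x.1 n b, update_mem_eventuallyEqSet x.2 n b⟩, by rwa [dist_self],
    (PiNat.dist_update_le x.1 n b).trans_lt hnε, n, hn, ?_⟩
  rw [Subtype.dist_eq, MapsTo.coe_iterate_restrict, MapsTo.coe_iterate_restrict,
    dist_iterate_seqShift_eq_one (by simpa using hb.symm)]
  exact hδ

end PiNatMetric

/-- there is a system sensitive but not asymptotically sensitive. -/
theorem exists_sensitive_not_asymptoticSensitive :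
    ∃ (X : Type) (_ : MetricSpace X) (T : X → X), Continuous T ∧
      (∃ δ > 0, ∀ x : X, ∀ ε > 0, ∃ y z : X, dist y x < ε ∧ dist z x < ε ∧
        ∃ n ≥ 1, dist (T^[n] y) (T^[n] z) > δ) ∧
      ¬ ∃ δ > 0, ∀ x : X, ∀ ε > 0, ∃ y z : X, dist y x < ε ∧ dist z x < ε ∧
        {n : ℕ | dist (T^[n] y) (T^[n] z) > δ}.Infinite := by
  refine ⟨eventuallyEqSet false, inferInstance,
    (mapsTo_seqShift_eventuallyEqSet false).restrict seqShift _ _,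
    (continuous_seqShift.comp continuous_subtype_val).subtype_mk _,
    ⟨1 / 2, by norm_num, sensitive_restrict_seqShift false (by norm_num)⟩,
    fun ⟨δ, hδ, hT⟩ => not_asymptoticallySensitive_of_eventually_iterate_eq hδ.le
      eventually_iterate_restrict_seqShift_eq hT⟩
end
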